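/- Split conformal coverage lower bound: assume α ∈ (0, 1) and k = ⌈(1−α)(N+1)⌉ ≤ N. Let τ̂ be the k-th smallest value among the calibration scores s(X_1, Y_1), …, s(X_N, Y_N), and let C_τ̂(x) = { y ∈ 𝒴 : s(x, y) ≤ τ̂ }. Then P( Y_{N+1} ∈ C_τ̂(X_{N+1}) ) ≥ 1 − α, where the probability is over the joint draw of all N+1 pairs. -/

import Mathlib

open MeasureTheory

/-- The `k`-th smallest value (1-indexed) among the values `v 0, …, v (N-1)`. -/
noncomputable def orderStat (N : ℕ) (v : Fin N → ℝ) (k : ℕ) : ℝ :=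
  (Multiset.sort (Multiset.map v Finset.univ.val) (· ≤ ·)).getD (k - 1) 0

/-- The split conformal prediction set `C_τ(x) = {y : s(x, y) ≤ τ}`. -/
def predSet {𝒳 𝒴 : Type*} (s : 𝒳 × 𝒴 → ℝ) (τ : ℝ) (x : 𝒳) : Set 𝒴 :=
  {y | s (x, y) ≤ τ}

/-!
The test pair is covered exactly when fewer than `k` calibration scores lie strictly below the
test score, that is, when the test score has strict rank `< k` among all `N + 1` scores. The
scores are i.i.d., so their joint law is a product measure invariant under permutations of the
coordinates, and the events "score `i` has strict rank `< k`" all have the same probability.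
In every realisation at least `k` of these events occur (the `k` smallest scores, ties included),
so `N + 1` times the coverage probability is at least `k ≥ (1 - α)(N + 1)`.
-/

open Finset
open scoped ENNReal

theorem List.SortedLE.le_getElem_iff_countP_lt_le {α : Type*} [LinearOrder α] {l : List α}
    (hl : l.SortedLE) {i : ℕ} (hi : i < l.length) (x : α) :
    x ≤ l[i] ↔ l.countP (· < x) ≤ i := by
  have hsplit : l.countP (· < x) = (l.take i).countP (· < x) + (l.drop i).countP (· < x) := by
    rw [← List.countP_append, List.take_append_drop]
  have htake : ∀ y ∈ l.take i, y ≤ l[i] := by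
    intro y hy
    obtain ⟨j, hj, rfl⟩ := List.mem_take_iff_getElem.mp hy
    exact hl.getElem_le_getElem_of_le (by omega)
  have hdrop : ∀ y ∈ l.drop i, l[i] ≤ y := by
    intro y hy
    obtain ⟨j, hj, rfl⟩ := List.mem_drop_iff_getElem.mp hy
    exact hl.getElem_le_getElem_of_le (by omega)
  have hmem : l[i] ∈ l.drop i := List.mem_drop_iff_getElem.mpr ⟨0, by simpa using hi, by simp⟩
  have hlen : (l.take i).length = i := List.length_take_of_le hi.le
  constructor
  · intro hx
    have : (l.drop i).countP (· < x) = 0 :=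
      List.countP_eq_zero.mpr fun y hy => by simpa using hx.trans (hdrop y hy)
    have := (l.take i).countP_le_length (p := (· < x))
    omega
  · intro hcount
    by_contra! hx
    have : (l.take i).countP (· < x) = i := by
      rw [List.countP_eq_length.mpr fun y hy => by simpa using (htake y hy).trans_lt hx, hlen]
    have : 0 < (l.drop i).countP (· < x) :=
      List.countP_pos_iff.mpr ⟨l[i], hmem, by simpa using hx⟩
    omega

theorem Multiset.countP_sort_map_univ {ι α : Type*} [Fintype ι] [LinearOrder α] (v : ι → α)
    (p : α → Prop) [DecidablePred p] :
    (Multiset.sort (Multiset.map v univ.val) (· ≤ ·)).countP p = #{j | p (v j)} := by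
  rw [← Multiset.coe_countP, Multiset.sort_eq, Multiset.countP_map]
  rfl

theorem le_orderStat_iff {n k : ℕ} (hk : 1 ≤ k) (hkn : k ≤ n) (v : Fin n → ℝ) (x : ℝ) :
    x ≤ orderStat n v k ↔ #{j | v j < x} < k := by
  have hlen : k - 1 < (Multiset.sort (Multiset.map v univ.val) (· ≤ ·)).length := by
    simp only [Multiset.length_sort, Multiset.card_map, card_val, card_univ, Fintype.card_fin]
    omega
  rw [orderStat, List.getD_eq_getElem _ _ hlen,
    (Multiset.pairwise_sort _ _).sortedLE.le_getElem_iff_countP_lt_le hlen,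
    Multiset.countP_sort_map_univ]
  omega

def strictRank {ι β : Type*} [Fintype ι] [LinearOrder β] (v : ι → β) (i : ι) : ℕ :=
  #{j | v j < v i}

section StrictRank

variable {ι β : Type*} [Fintype ι] [LinearOrder β]

theorem strictRank_comp_perm (v : ι → β) (σ : Equiv.Perm ι) (i : ι) :
    strictRank (v ∘ σ) i = strictRank v (σ i) :=
  card_equiv σ (by simp)

/-- A coordinate of minimal value outside the set would have all its strict predecessors inside. -/
theorem le_card_filter_strictRank_lt (v : ι → β) {k : ℕ} (hk : k ≤ Fintype.card ι) :
    k ≤ #{i | strictRank v i < k} := by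
  classical
  set A : Finset ι := {i | strictRank v i < k}
  by_contra! hA
  have hAc : Aᶜ.Nonempty := by
    rw [← card_pos, card_compl]
    omega
  obtain ⟨i, hiA, hmin⟩ := Aᶜ.exists_min_image v hAc
  have hsub : ({j | v j < v i} : Finset ι) ⊆ A := by
    intro j hj
    by_contra hjA
    exact (hmin j (mem_compl.mpr hjA)).not_gt (mem_filter.mp hj).2
  have : strictRank v i < k := (card_le_card hsub).trans_lt hA
  exact mem_compl.mp hiA (mem_filter.mpr ⟨mem_univ i, this⟩)

theorem strictRank_last {n : ℕ} (w : Fin (n + 1) → β) :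
    strictRank w (Fin.last n) = #{j : Fin n | w j.castSucc < w (Fin.last n)} := by
  simp only [strictRank, card_filter, Fin.sum_univ_castSucc, lt_irrefl, if_false,
    add_zero]

end StrictRank

open Classical in
theorem le_sum_measure_of_le_card_filter_mem {α ι : Type*} [MeasurableSpace α] [Fintype ι]
    (μ : Measure α) {B : ι → Set α} (hB : ∀ i, MeasurableSet (B i)) {k : ℕ}
    (hk : ∀ x, k ≤ #{i | x ∈ B i}) :
    k * μ Set.univ ≤ ∑ i, μ (B i) := by
  calc k * μ Set.univ = ∫⁻ _, (k : ℝ≥0∞) ∂μ := (lintegral_const _).symm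
    _ ≤ ∫⁻ x, ∑ i, (B i).indicator 1 x ∂μ := by
        refine lintegral_mono fun x => ?_
        simp only [Set.indicator_apply, Pi.one_apply, sum_boole]
        exact_mod_cast hk x
    _ = ∑ i, μ (B i) := by
        rw [lintegral_finsetSum _ fun i _ => measurable_one.indicator (hB i)]
        exact sum_congr rfl fun i _ => lintegral_indicator_one (hB i)

section Exchangeable

variable {ι β : Type*} [Fintype ι] [LinearOrder β] [MeasurableSpace β] [TopologicalSpace β]
  [OrderClosedTopology β] [SecondCountableTopology β] [OpensMeasurableSpace β]

theorem measurableSet_strictRank_lt (i : ι) (k : ℕ) :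
    MeasurableSet {v : ι → β | strictRank v i < k} := by
  have : Measurable fun v : ι → β => strictRank v i := by
    simp only [strictRank, card_filter]
    exact measurable_sum _ fun j _ => Measurable.ite
      (measurableSet_lt (measurable_pi_apply j) (measurable_pi_apply i))
      measurable_const measurable_const
  exact this (measurableSet_Iio (a := k))

theorem pi_strictRank_lt_eq (ν : Measure β) [SigmaFinite ν] (k : ℕ) (i j : ι) :
    Measure.pi (fun _ : ι => ν) {v | strictRank v i < k}
      = Measure.pi (fun _ : ι => ν) {v | strictRank v j < k} := by
  classical
  set σ := Equiv.swap i j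
  have h := (measurePreserving_piCongrLeft (fun _ : ι => ν) σ).measure_preimage
    (measurableSet_strictRank_lt j k).nullMeasurableSet
  rw [← h]
  congr 1
  ext v
  have hv : Equiv.piCongrLeft (fun _ => β) σ v ∘ σ = v :=
    funext (Equiv.piCongrLeft_apply_apply (fun _ => β) σ v)
  show strictRank v i < k ↔ _
  conv_lhs => rw [← hv, strictRank_comp_perm, Equiv.swap_apply_left]
  rfl

theorem div_card_le_pi_strictRank_lt (ν : Measure β) [IsProbabilityMeasure ν] {k : ℕ}
    (hk : k ≤ Fintype.card ι) (i : ι) :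
    (k : ℝ≥0∞) / Fintype.card ι
      ≤ Measure.pi (fun _ : ι => ν) {v | strictRank v i < k} := by
  refine ENNReal.div_le_of_le_mul' ?_
  calc (k : ℝ≥0∞) = k * Measure.pi (fun _ : ι => ν) Set.univ := by simp
    _ ≤ ∑ j, Measure.pi (fun _ : ι => ν) {v | strictRank v j < k} :=
        le_sum_measure_of_le_card_filter_mem _ (fun j => measurableSet_strictRank_lt j k)
          fun v => by simpa using le_card_filter_strictRank_lt v hk
    _ = Fintype.card ι * Measure.pi (fun _ : ι => ν) {v | strictRank v i < k} := by
        simp [pi_strictRank_lt_eq ν k _ i]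

end Exchangeable

theorem ofReal_le_natCeil_mul_div (x : ℝ) {n : ℕ} (hn : n ≠ 0) :
    ENNReal.ofReal x ≤ (⌈x * n⌉₊ : ℝ≥0∞) / n := by
  rw [ENNReal.le_div_iff_mul_le (by simp [hn]) (by simp), ← ENNReal.ofReal_natCast,
    ← ENNReal.ofReal_natCast, ← ENNReal.ofReal_mul' n.cast_nonneg]
  exact ENNReal.ofReal_le_ofReal (Nat.le_ceil _)

theorem split_conformal_coverage_lower_bound_general
    {Ω : Type*} [MeasurableSpace Ω] (P : Measure Ω) [IsProbabilityMeasure P]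
    {𝒳 : Type*} [MeasurableSpace 𝒳]
    {𝒴 : Type*} [MeasurableSpace 𝒴]
    (N : ℕ)
    (X : Fin (N + 1) → Ω → 𝒳) (Y : Fin (N + 1) → Ω → 𝒴)
    (hX : ∀ i, Measurable (X i)) (hY : ∀ i, Measurable (Y i))
    (hindep : ProbabilityTheory.iIndepFun
      (fun i ω => (X i ω, Y i ω)) P)
    (hident : ∀ i, Measure.map (fun ω => (X i ω, Y i ω)) P
      = Measure.map (fun ω => (X 0 ω, Y 0 ω)) P)
    (s : 𝒳 × 𝒴 → ℝ) (hs : Measurable s)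
    (α : ℝ) (hα1 : α < 1)
    (k : ℕ) (hk : k = ⌈(1 - α) * (N + 1 : ℝ)⌉₊) (hkN : k ≤ N) :
    ENNReal.ofReal (1 - α)
      ≤ P {ω | Y (Fin.last N) ω ∈
            predSet s
              (orderStat N (fun i => s (X i.castSucc ω, Y i.castSucc ω)) k)
              (X (Fin.last N) ω)} := by
  have hk1 : 1 ≤ k := hk ▸ Nat.one_le_iff_ne_zero.mpr (Nat.ceil_pos.mpr (by nlinarith)).ne'
  have hXY i : Measurable fun ω => (X i ω, Y i ω) := (hX i).prodMk (hY i)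
  set S : Fin (N + 1) → Ω → ℝ := fun i ω => s (X i ω, Y i ω)
  have hS i : Measurable (S i) := hs.comp (hXY i)
  have hlaw : P.map (fun ω i => S i ω) = Measure.pi fun _ => P.map (S 0) := by
    rw [(hindep.comp (fun _ => s) fun _ => hs).map_fun_eq_pi_map fun i => (hS i).aemeasurable]
    congr! 2 with i
    calc P.map (S i) = (P.map fun ω => (X i ω, Y i ω)).map s := (Measure.map_map hs (hXY i)).symm
      _ = P.map (S 0) := by rw [hident i, Measure.map_map hs (hXY 0)]; rfl
  have hevent : {ω | Y (Fin.last N) ω ∈ predSet s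
      (orderStat N (fun i => s (X i.castSucc ω, Y i.castSucc ω)) k) (X (Fin.last N) ω)}
      = (fun ω i => S i ω) ⁻¹' {v | strictRank v (Fin.last N) < k} := by
    ext ω
    simp [predSet, le_orderStat_iff hk1 hkN, strictRank_last, S]
  have : IsProbabilityMeasure (P.map (S 0)) :=
    Measure.isProbabilityMeasure_map (hS 0).aemeasurable
  have hcover := div_card_le_pi_strictRank_lt (P.map (S 0)) (k := k)
    (by rw [Fintype.card_fin]; omega) (Fin.last N)
  rw [hevent, ← Measure.map_apply (measurable_pi_lambda _ hS) (measurableSet_strictRank_lt _ _),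
    hlaw]
  refine le_trans ?_ hcover
  simpa [hk] using ofReal_le_natCeil_mul_div (1 - α) N.succ_ne_zero

/-- **split conformal coverage lower bound.**  Let
`(X 0, Y 0), …, (X N, Y N)` be i.i.d. pairs (`N ≥ 1` calibration pairs, one test pair),
`s` a measurable score, `α ∈ (0, 1)` and `k = ⌈(1 - α)(N + 1)⌉ ≤ N`.  With `τ̂` the `k`-th
smallest calibration score, the prediction set `C_τ̂` covers the test label with
probability at least `1 - α`. -/
theorem split_conformal_coverage_lower_bound
    {Ω : Type*} [MeasurableSpace Ω] (P : Measure Ω) [IsProbabilityMeasure P]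
    {𝒳 : Type*} [MeasurableSpace 𝒳]
    {𝒴 : Type*} [Fintype 𝒴] [Nonempty 𝒴] [MeasurableSpace 𝒴]
    (N : ℕ) (hN : 1 ≤ N)
    (X : Fin (N + 1) → Ω → 𝒳) (Y : Fin (N + 1) → Ω → 𝒴)
    (hX : ∀ i, Measurable (X i)) (hY : ∀ i, Measurable (Y i))
    (hindep : ProbabilityTheory.iIndepFun
      (fun i ω => (X i ω, Y i ω)) P)
    (hident : ∀ i, Measure.map (fun ω => (X i ω, Y i ω)) P
      = Measure.map (fun ω => (X 0 ω, Y 0 ω)) P)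
    (s : 𝒳 × 𝒴 → ℝ) (hs : Measurable s)
    (α : ℝ) (hα0 : 0 < α) (hα1 : α < 1)
    (k : ℕ) (hk : k = ⌈(1 - α) * (N + 1 : ℝ)⌉₊) (hkN : k ≤ N) :
    ENNReal.ofReal (1 - α)
      ≤ P {ω | Y (Fin.last N) ω ∈
            predSet s
              (orderStat N (fun i => s (X i.castSucc ω, Y i.castSucc ω)) k)
              (X (Fin.last N) ω)} :=
  split_conformal_coverage_lower_bound_general P N X Y hX hY hindep hident s hs α hα1 k hk hkN
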